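/- arXiv:0903.2917 — 7 statements merged into one kernel-verified Lean document; each statement's English description precedes it below -/
import Mathlib

section
/- Let (W,+,≤) be a positive ordered abelian semigroup and let x, y ∈ W. Then the following are equivalent: (i) there exists a positive integer k such that (k+1)x ≤ ky; (ii) there exists a positive integer k₀ such that (k+1)x ≤ ky for every k ≥ k₀; (iii) x ∝ y and f(x) < f(y) for every state f on W normalized at y. -/
/-!
(i) ⇒ (ii) is division with remainder and (i) ⇒ (iii) is evaluation of a state. For
(iii) ⇒ (i), adjoin a zero to `W` and suppose that no `(k+1)x ≤ ky` holds. Then `ay + nx ≤ by`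
forces `a + n ≤ b`: for `n = 0` a violation makes `by` absorb every multiple of `y`, hence
(as `x ∝ y`) also `(b+1)x`; for `n > 0` it can be iterated into some `(K+1)x ≤ Ky`. So
`ny ↦ n` is a partial state on the multiples of `y` at which the value `1` is compatible with
every constraint `c + kx ≤ d`. A partial state extends to any new element by its largest
compatible value, because a constraint involving the element and a constraint violated by a
larger value combine to eliminate it. Zorn's lemma then gives a state with `f y = 1 ≤ f x`.
-/

open scoped ENNReal

namespace Stmt0

variable {W : Type*} [AddCommSemigroup W] [PartialOrder W]

/-- `rep n x` is the `(n+1)`-fold sum `x + x + ⋯ + x`, so that `rep n x = (n+1)·x`. -/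
def rep : ℕ → W → W
  | 0, x => x
  | n + 1, x => rep n x + x

/-- A state on `W` normalized at `y` : an additive, order preserving map into `[0,∞]`
sending `y` to `1`. -/
structure IsStateAt (f : W → ℝ≥0∞) (y : W) : Prop where
  additive : ∀ a b : W, f (a + b) = f a + f b
  mono : ∀ a b : W, a ≤ b → f a ≤ f b
  normalized : f y = 1

section OrderedMonoid

variable {M : Type*} [AddCommMonoid M] [PartialOrder M] [IsOrderedAddMonoid M]

theorem add_nsmul_le_add_nsmul {a b c : M} (h : a + b ≤ a + c) (n : ℕ) :
    a + n • b ≤ a + n • c := by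
  induction n with
  | zero => simp
  | succ n ih =>
    calc a + (n + 1) • b = (a + n • b) + b := by rw [succ_nsmul, add_assoc]
      _ ≤ (a + n • c) + b := by gcongr
      _ = n • c + (a + b) := by abel
      _ ≤ n • c + (a + c) := by gcongr
      _ = a + (n + 1) • c := by rw [succ_nsmul]; abel

theorem nsmul_add_nsmul_add_mul_nsmul_le {a b c d w : M} {n m k : ℕ}
    (h : a + n • w ≤ b + m • w) (h' : c + k • w ≤ d) :
    k • a + m • c + (k * n) • w ≤ k • b + m • d :=
  calc k • a + m • c + (k * n) • w = k • (a + n • w) + m • c := by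
        rw [mul_nsmul', smul_add]; abel
    _ ≤ k • (b + m • w) + m • c := by gcongr
    _ = k • b + m • (c + k • w) := by
        rw [smul_add, smul_add, ← mul_nsmul', ← mul_nsmul', mul_comm]; abel
    _ ≤ k • b + m • d := by gcongr

variable [IsBotZeroClass M] {x y : M}

theorem succ_nsmul_le_nsmul_of_sq_le {K : ℕ} (hK : (K + 1) • x ≤ K • y) {m : ℕ}
    (hm : K ^ 2 ≤ m) : (m + 1) • x ≤ m • y := by
  rcases Nat.eq_zero_or_pos K with rfl | hK0
  · have hx : x = 0 := le_antisymm (by simpa using hK) zero_le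
    simp [hx]
  obtain ⟨q, r, hr, rfl⟩ : ∃ q r, r < K ∧ m = K * q + r :=
    ⟨m / K, m % K, Nat.mod_lt m hK0, (Nat.div_add_mod m K).symm⟩
  have hq : K ≤ q := by nlinarith
  calc (K * q + r + 1) • x ≤ (q * (K + 1)) • x := nsmul_le_nsmul_left zero_le (by nlinarith)
    _ = q • ((K + 1) • x) := mul_nsmul' x q (K + 1)
    _ ≤ q • (K • y) := nsmul_le_nsmul_right hK q
    _ = (K * q) • y := by rw [← mul_nsmul', mul_comm]
    _ ≤ (K * q + r) • y := nsmul_le_nsmul_left zero_le (Nat.le_add_right _ _)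

theorem two_mul_add_two_nsmul_le {k : ℕ} (h : (k + 1) • x ≤ k • y) :
    (2 * k + 2) • x ≤ (2 * k + 1) • y :=
  calc (2 * k + 2) • x = 2 • ((k + 1) • x) := by rw [← mul_nsmul']; ring_nf
    _ ≤ 2 • (k • y) := nsmul_le_nsmul_right h 2
    _ = (2 * k) • y := (mul_nsmul' y 2 k).symm
    _ ≤ (2 * k + 1) • y := nsmul_le_nsmul_left zero_le (Nat.le_succ _)

theorem add_le_of_nsmul_add_nsmul_le (hxy : ∀ k : ℕ, ¬ (k + 1) • x ≤ k • y) {N : ℕ}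
    (hx : x ≤ N • y) {a b n : ℕ} (h : a • y + n • x ≤ b • y) : a + n ≤ b := by
  by_contra! hlt
  rcases Nat.eq_zero_or_pos n with rfl | hn
  · -- `(b + 1) • y ≤ b • y`, so `b • y` absorbs all multiples of `y`, hence of `x`
    have hb : b • y + y ≤ b • y + 0 :=
      calc b • y + y = (b + 1) • y := (succ_nsmul y b).symm
        _ ≤ a • y := nsmul_le_nsmul_left zero_le (by omega)
        _ ≤ b • y + 0 := by simpa using h
    apply hxy b
    calc (b + 1) • x ≤ (b + 1) • (N • y) := nsmul_le_nsmul_right hx _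
      _ = ((b + 1) * N) • y := (mul_nsmul' y _ _).symm
      _ ≤ b • y + ((b + 1) * N) • y := le_add_of_nonneg_left zero_le
      _ ≤ b • y + ((b + 1) * N) • 0 := add_nsmul_le_add_nsmul hb _
      _ = b • y := by simp
  · set d := max a b - a
    have hd : a • y + n • x ≤ a • y + d • y := by
      rw [← add_nsmul, Nat.add_sub_cancel' (le_max_left a b)]
      exact h.trans (nsmul_le_nsmul_left zero_le (le_max_right a b))
    have hdn : d + 1 ≤ n := by omega
    apply hxy (a + (a + 1) * d)
    calc (a + (a + 1) * d + 1) • x ≤ ((a + 1) * n) • x :=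
          nsmul_le_nsmul_left zero_le (by nlinarith)
      _ ≤ a • y + (a + 1) • (n • x) := by
          rw [mul_nsmul']; exact le_add_of_nonneg_left zero_le
      _ ≤ a • y + (a + 1) • (d • y) := add_nsmul_le_add_nsmul hd _
      _ = (a + (a + 1) * d) • y := by rw [← mul_nsmul', add_nsmul]

end OrderedMonoid

theorem AddSubmonoid.mem_sup_closure_singleton {M : Type*} [AddCommMonoid M]
    {S : AddSubmonoid M} {w u : M} :
    u ∈ S ⊔ AddSubmonoid.closure {w} ↔ ∃ a ∈ S, ∃ n : ℕ, a + n • w = u := by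
  simp only [AddSubmonoid.mem_sup, AddSubmonoid.mem_closure_singleton]
  constructor
  · rintro ⟨a, ha, _, ⟨n, rfl⟩, rfl⟩
    exact ⟨a, ha, n, rfl⟩
  · rintro ⟨a, ha, n, rfl⟩
    exact ⟨a, ha, _, ⟨n, rfl⟩, rfl⟩

structure PartialState (M : Type*) [AddCommMonoid M] [PartialOrder M] where
  dom : AddSubmonoid M
  toFun : M → ℝ≥0∞
  map_zero : toFun 0 = 0
  map_add : ∀ ⦃a⦄, a ∈ dom → ∀ ⦃b⦄, b ∈ dom → toFun (a + b) = toFun a + toFun b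
  monotoneOn : MonotoneOn toFun dom

namespace PartialState

variable {M : Type*} [AddCommMonoid M] [PartialOrder M]

instance : CoeFun (PartialState M) fun _ => M → ℝ≥0∞ := ⟨toFun⟩

instance : Preorder (PartialState M) where
  le p q := p.dom ≤ q.dom ∧ Set.EqOn q p p.dom
  le_refl p := ⟨le_rfl, fun _ _ => rfl⟩
  le_trans p q r hpq hqr := ⟨hpq.1.trans hqr.1, fun a ha => (hqr.2 (hpq.1 ha)).trans (hpq.2 ha)⟩

variable (p : PartialState M)

theorem map_nsmul {a : M} (ha : a ∈ p.dom) (n : ℕ) : p (n • a) = n * p a := by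
  induction n with
  | zero => simpa using p.map_zero
  | succ n ih =>
    rw [succ_nsmul, p.map_add (p.dom.nsmul_mem ha n) ha, ih]
    push_cast
    ring

theorem exists_ge_of_isChain {c : Set (PartialState M)} (hc : IsChain (· ≤ ·) c)
    (hne : c.Nonempty) : ∃ q : PartialState M, ∀ p ∈ c, p ≤ q := by
  classical
  have common : ∀ {a b : M}, (∃ p ∈ c, a ∈ p.dom) → (∃ p ∈ c, b ∈ p.dom) →
      ∃ p ∈ c, a ∈ p.dom ∧ b ∈ p.dom := by
    rintro a b ⟨p, hp, ha⟩ ⟨q, hq, hb⟩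
    rcases hc.total hp hq with hpq | hqp
    · exact ⟨q, hq, hpq.1 ha, hb⟩
    · exact ⟨p, hp, ha, hqp.1 hb⟩
  let f : M → ℝ≥0∞ := fun u => if h : ∃ p ∈ c, u ∈ p.dom then h.choose u else 0
  have f_eq : ∀ p ∈ c, ∀ u ∈ p.dom, f u = p u := by
    intro p hp u hu
    have h : ∃ p ∈ c, u ∈ p.dom := ⟨p, hp, hu⟩
    obtain ⟨hq, hqu⟩ := h.choose_spec
    simp only [f, dif_pos h]
    rcases hc.total hp hq with hpq | hqp
    · exact hpq.2 hu
    · exact (hqp.2 hqu).symm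
  obtain ⟨p₀, hp₀⟩ := hne
  let dom : AddSubmonoid M :=
    { carrier := {u | ∃ p ∈ c, u ∈ p.dom}
      zero_mem' := ⟨p₀, hp₀, zero_mem _⟩
      add_mem' := fun ha hb =>
        let ⟨p, hp, ha, hb⟩ := common ha hb
        ⟨p, hp, add_mem ha hb⟩ }
  refine ⟨⟨dom, f, ?_, ?_, ?_⟩,
    fun p hp => ⟨fun u hu => ⟨p, hp, hu⟩, fun u hu => f_eq p hp u hu⟩⟩
  · rw [f_eq p₀ hp₀ 0 (zero_mem _), p₀.map_zero]
  · intro a ha b hb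
    obtain ⟨p, hp, ha, hb⟩ := common ha hb
    rw [f_eq p hp _ (add_mem ha hb), f_eq p hp a ha, f_eq p hp b hb, p.map_add ha hb]
  · intro a ha b hb hab
    obtain ⟨p, hp, ha, hb⟩ := common ha hb
    rw [f_eq p hp a ha, f_eq p hp b hb]
    exact p.monotoneOn ha hb hab

noncomputable def nsmulIndex (y u : M) : ℝ≥0∞ := ⨅ (n : ℕ) (_ : n • y = u), (n : ℝ≥0∞)

theorem nsmulIndex_nsmul {y : M} (hy : ∀ {n m : ℕ}, n • y ≤ m • y → n ≤ m) (n : ℕ) :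
    nsmulIndex y (n • y) = n :=
  le_antisymm (iInf_le_of_le n (iInf_le _ rfl))
    (le_iInf₂ fun _ h => by exact_mod_cast hy h.ge)

noncomputable def multiples {y : M} (hy : ∀ {n m : ℕ}, n • y ≤ m • y → n ≤ m) :
    PartialState M where
  dom := AddSubmonoid.closure {y}
  toFun := nsmulIndex y
  map_zero := by simpa using nsmulIndex_nsmul hy 0
  map_add := by
    intro _ hu _ hv
    obtain ⟨n, rfl⟩ := AddSubmonoid.mem_closure_singleton.1 hu
    obtain ⟨m, rfl⟩ := AddSubmonoid.mem_closure_singleton.1 hv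
    rw [← add_nsmul, nsmulIndex_nsmul hy, nsmulIndex_nsmul hy, nsmulIndex_nsmul hy]
    push_cast
    rfl
  monotoneOn := by
    intro _ hu _ hv h
    obtain ⟨n, rfl⟩ := AddSubmonoid.mem_closure_singleton.1 hu
    obtain ⟨m, rfl⟩ := AddSubmonoid.mem_closure_singleton.1 hv
    simp only [nsmulIndex_nsmul hy]
    exact_mod_cast hy h

theorem multiples_apply_nsmul {y : M} (hy : ∀ {n m : ℕ}, n • y ≤ m • y → n ≤ m) (n : ℕ) :
    multiples hy (n • y) = n :=
  nsmulIndex_nsmul hy n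

def Compatible (w : M) (s : ℝ≥0∞) : Prop :=
  ∀ ⦃c⦄, c ∈ p.dom → ∀ ⦃d⦄, d ∈ p.dom → ∀ k : ℕ, c + k • w ≤ d → p c + k * s ≤ p d

noncomputable def maxCompatible (w : M) : ℝ≥0∞ := sSup {s | p.Compatible w s}

variable [IsOrderedAddMonoid M] [IsBotZeroClass M]

theorem compatible_maxCompatible (w : M) : p.Compatible w (p.maxCompatible w) := by
  intro c hc d hd k h
  have hzero : p.Compatible w 0 := fun c hc d hd k h => by
    simpa using p.monotoneOn hc hd ((le_add_of_nonneg_right zero_le).trans h)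
  rw [maxCompatible, ENNReal.mul_sSup, ENNReal.add_biSup ⟨0, hzero⟩]
  exact iSup₂_le fun s hs => hs hc hd k h

-- A constraint violated by `s` combines with `h` to eliminate `w`.
theorem add_mul_le_add_mul_of_maxCompatible_lt {w a b : M} (ha : a ∈ p.dom) (hb : b ∈ p.dom)
    {n m : ℕ} (h : a + n • w ≤ b + m • w) {s : ℝ≥0∞} (hs : p.maxCompatible w < s) :
    p a + n * p.maxCompatible w ≤ p b + m * s := by
  set t := p.maxCompatible w
  obtain ⟨c, hc, d, hd, k, hcd, hlt⟩ :
      ∃ c ∈ p.dom, ∃ d ∈ p.dom, ∃ k : ℕ, c + k • w ≤ d ∧ p d < p c + k * s := by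
    have : ¬ p.Compatible w s := fun hs' => hs.not_ge (le_sSup hs')
    simpa [Compatible] using this
  have hpcd : p c ≤ p d := p.monotoneOn hc hd ((le_add_of_nonneg_right zero_le).trans hcd)
  have hpc : p c ≠ ⊤ := ne_top_of_le_ne_top (ne_top_of_lt hlt) hpcd
  have hk : (k : ℝ≥0∞) ≠ 0 := by
    rintro hk
    simp [hk] at hlt
    exact hlt.not_ge hpcd
  have key := p.compatible_maxCompatible w
    (add_mem (p.dom.nsmul_mem ha k) (p.dom.nsmul_mem hc m))
    (add_mem (p.dom.nsmul_mem hb k) (p.dom.nsmul_mem hd m)) _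
    (nsmul_add_nsmul_add_mul_nsmul_le h hcd)
  rw [p.map_add (p.dom.nsmul_mem ha k) (p.dom.nsmul_mem hc m),
    p.map_add (p.dom.nsmul_mem hb k) (p.dom.nsmul_mem hd m),
    p.map_nsmul ha, p.map_nsmul hb, p.map_nsmul hc, p.map_nsmul hd] at key
  have : k * (p a + n * t) + m * p c ≤ k * (p b + m * s) + m * p c :=
    calc k * (p a + n * t) + m * p c = k * p a + m * p c + ((k * n : ℕ) : ℝ≥0∞) * t := by
          push_cast; ring
      _ ≤ k * p b + m * p d := key
      _ ≤ k * p b + m * (p c + k * s) := by gcongr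
      _ = k * (p b + m * s) + m * p c := by ring
  exact (ENNReal.mul_le_mul_iff_right hk (ENNReal.natCast_ne_top k)).1
    ((ENNReal.add_le_add_iff_right (ENNReal.mul_ne_top (ENNReal.natCast_ne_top m) hpc)).1 this)

theorem add_mul_le_add_mul {w a b : M} (ha : a ∈ p.dom) (hb : b ∈ p.dom) {n m : ℕ}
    (h : a + n • w ≤ b + m • w) :
    p a + n * p.maxCompatible w ≤ p b + m * p.maxCompatible w := by
  set t := p.maxCompatible w
  rcases Nat.eq_zero_or_pos m with rfl | hm
  · simpa using p.compatible_maxCompatible w ha hb n (by simpa using h)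
  rcases eq_or_ne t ⊤ with ht | ht
  · simp [ht, ENNReal.mul_top (Nat.cast_ne_zero.2 hm.ne')]
  refine ENNReal.le_of_forall_pos_le_add fun ε hε _ => ?_
  have hm' : (m : ℝ≥0∞) ≠ 0 := Nat.cast_ne_zero.2 hm.ne'
  have hε' : (ε : ℝ≥0∞) / m ≠ 0 :=
    (ENNReal.div_pos (by exact_mod_cast hε.ne') (ENNReal.natCast_ne_top m)).ne'
  calc p a + n * t ≤ p b + m * (t + ε / m) :=
        p.add_mul_le_add_mul_of_maxCompatible_lt ha hb h (ENNReal.lt_add_right ht hε')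
    _ = p b + m * t + ε := by
        rw [mul_add, ENNReal.mul_div_cancel hm' (ENNReal.natCast_ne_top m), add_assoc]

noncomputable def extendFun (w u : M) : ℝ≥0∞ :=
  ⨅ (a ∈ p.dom) (n : ℕ) (_ : a + n • w = u), p a + n * p.maxCompatible w

theorem extendFun_add_nsmul (w : M) {a : M} (ha : a ∈ p.dom) (n : ℕ) :
    p.extendFun w (a + n • w) = p a + n * p.maxCompatible w :=
  le_antisymm ((iInf₂_le a ha).trans ((iInf_le _ n).trans (iInf_le _ rfl)))
    (le_iInf₂ fun _ hb => le_iInf fun _ => le_iInf fun h => p.add_mul_le_add_mul ha hb h.ge)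

noncomputable def extend (w : M) : PartialState M where
  dom := p.dom ⊔ AddSubmonoid.closure {w}
  toFun := p.extendFun w
  map_zero := by simpa [p.map_zero] using p.extendFun_add_nsmul w p.dom.zero_mem 0
  map_add := by
    intro _ hu _ hv
    obtain ⟨a, ha, n, rfl⟩ := AddSubmonoid.mem_sup_closure_singleton.1 hu
    obtain ⟨b, hb, m, rfl⟩ := AddSubmonoid.mem_sup_closure_singleton.1 hv
    rw [show a + n • w + (b + m • w) = (a + b) + (n + m) • w by rw [add_nsmul]; abel,
      p.extendFun_add_nsmul w (add_mem ha hb), p.extendFun_add_nsmul w ha,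
      p.extendFun_add_nsmul w hb, p.map_add ha hb]
    push_cast
    ring
  monotoneOn := by
    intro _ hu _ hv h
    obtain ⟨a, ha, n, rfl⟩ := AddSubmonoid.mem_sup_closure_singleton.1 hu
    obtain ⟨b, hb, m, rfl⟩ := AddSubmonoid.mem_sup_closure_singleton.1 hv
    simp only [p.extendFun_add_nsmul w ha, p.extendFun_add_nsmul w hb]
    exact p.add_mul_le_add_mul ha hb h

theorem le_extend (w : M) : p ≤ p.extend w :=
  ⟨le_sup_left, fun a ha =>
    (by simpa using p.extendFun_add_nsmul w ha 0 : p.extendFun w a = p a)⟩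

theorem extend_apply_self (w : M) : p.extend w w = p.maxCompatible w :=
  (by simpa [p.map_zero] using p.extendFun_add_nsmul w p.dom.zero_mem 1 :
    p.extendFun w w = p.maxCompatible w)

theorem dom_eq_top_of_isMax (hp : IsMax p) : p.dom = ⊤ := by
  refine eq_top_iff.2 fun w _ => ?_
  exact (hp (p.le_extend w)).1 (AddSubmonoid.mem_sup_right (AddSubmonoid.subset_closure rfl))

end PartialState

open PartialState in
theorem exists_monotone_addMonoidHom_one_le {M : Type*} [AddCommMonoid M] [PartialOrder M]
    [IsOrderedAddMonoid M] [IsBotZeroClass M] {x y : M} (hxy : ∀ k : ℕ, ¬ (k + 1) • x ≤ k • y)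
    {N : ℕ} (hx : x ≤ N • y) : ∃ f : M →+ ℝ≥0∞, Monotone f ∧ f y = 1 ∧ 1 ≤ f x := by
  have bound : ∀ {a b n : ℕ}, a • y + n • x ≤ b • y → a + n ≤ b :=
    add_le_of_nsmul_add_nsmul_le hxy hx
  have hy : ∀ {n m : ℕ}, n • y ≤ m • y → n ≤ m := fun h => by
    simpa using bound (n := 0) (by simpa using h)
  set p₀ := (multiples hy).extend x
  have hyp₀ : y ∈ p₀.dom := ((multiples hy).le_extend x).1 (AddSubmonoid.subset_closure rfl)
  have hp₀y : p₀ y = 1 := by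
    rw [((multiples hy).le_extend x).2 (AddSubmonoid.subset_closure rfl)]
    simpa using multiples_apply_nsmul hy 1
  have hp₀x : 1 ≤ p₀ x := by
    rw [extend_apply_self]
    refine le_sSup fun c hc d hd k h => ?_
    obtain ⟨a, rfl⟩ := AddSubmonoid.mem_closure_singleton.1 hc
    obtain ⟨b, rfl⟩ := AddSubmonoid.mem_closure_singleton.1 hd
    rw [multiples_apply_nsmul, multiples_apply_nsmul, mul_one]
    exact_mod_cast bound h
  obtain ⟨p, hp₀p, hmax⟩ := zorn_le_nonempty_Ici₀ p₀
    (fun c _ hc q hq => exists_ge_of_isChain hc ⟨q, hq⟩) p₀ le_rfl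
  have hmem : ∀ u, u ∈ p.dom := fun u => p.dom_eq_top_of_isMax hmax ▸ AddSubmonoid.mem_top u
  refine ⟨⟨⟨p, p.map_zero⟩, fun a b => p.map_add (hmem a) (hmem b)⟩,
    fun a b h => p.monotoneOn (hmem a) (hmem b) h, ?_, ?_⟩
  · exact (hp₀p.2 hyp₀).trans hp₀y
  · have hxp₀ : x ∈ p₀.dom := AddSubmonoid.mem_sup_right (AddSubmonoid.subset_closure rfl)
    exact hp₀x.trans (hp₀p.2 hxp₀).ge

theorem isOrderedAddMonoid_withZero (hadd : ∀ x y z : W, x ≤ y → x + z ≤ y + z)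
    (hpos : ∀ x z : W, x ≤ x + z) : IsOrderedAddMonoid (WithZero W) := by
  have right : ∀ a b : WithZero W, a ≤ b → ∀ c, a + c ≤ b + c := by
    intro a b hab c
    induction c with
    | zero => simpa using hab
    | coe c =>
      induction a with
      | zero =>
        induction b with
        | zero => exact le_rfl
        | coe b => simpa [← WithZero.coe_add, add_comm b c] using hpos c b
      | coe a =>
        induction b with
        | zero => exact absurd hab (WithZero.not_coe_le_zero a)
        | coe b => simpa [← WithZero.coe_add] using hadd a b c (WithZero.coe_le_coe.1 hab)
  exact ⟨right, fun a b hab c => by simpa [add_comm c] using right a b hab c⟩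

theorem coe_rep {S : Type*} [AddCommSemigroup S] (n : ℕ) (z : S) :
    ((rep n z : S) : WithZero S) = (n + 1) • (z : WithZero S) := by
  induction n with
  | zero => simp [rep]
  | succ n ih => rw [rep, WithZero.coe_add, ih, succ_nsmul _ (n + 1)]

theorem IsStateAt.apply_rep {f : W → ℝ≥0∞} {y : W} (hf : IsStateAt f y) (n : ℕ) (z : W) :
    f (rep n z) = (n + 1) * f z := by
  induction n with
  | zero => simp [rep]
  | succ n ih =>
    rw [rep, hf.additive, ih]
    push_cast
    ring

theorem IsStateAt.lt_of_rep_le {f : W → ℝ≥0∞} {x y : W} (hf : IsStateAt f y) {k : ℕ}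
    (h : rep (k + 1) x ≤ rep k y) : f x < f y := by
  have h' := hf.mono _ _ h
  rw [hf.apply_rep, hf.apply_rep, hf.normalized, mul_one] at h'
  rw [hf.normalized]
  by_contra! hx
  have := (mul_le_mul_right hx _).trans h'
  norm_cast at this
  omega

/-- Proposition 2.1: for a positive ordered abelian semigroup `W` and `x, y ∈ W`,
the following are equivalent:
(i) `(k+1)x ≤ ky` for some positive integer `k`;
(ii) there is a positive integer `k₀` such that `(k+1)x ≤ ky` for every positive `k ≥ k₀`;
(iii) `x ∝ y` (i.e. `x ≤ ny` for some positive integer `n`) and `f x < f y` for every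
state `f` on `W` normalized at `y`.
(A positive integer `k` is encoded as `k + 1` with `k : ℕ`, and `(k+1)·x` is `rep k x`.) -/
theorem stably_dominated_tfae
    (hadd : ∀ x y z : W, x ≤ y → x + z ≤ y + z)
    (hpos : ∀ x z : W, x ≤ x + z) (x y : W) :
    List.TFAE
      [∃ k : ℕ, rep (k + 1) x ≤ rep k y,
       ∃ k₀ : ℕ, ∀ k : ℕ, k₀ ≤ k → rep (k + 1) x ≤ rep k y,
       (∃ n : ℕ, x ≤ rep n y) ∧ ∀ f : W → ℝ≥0∞, IsStateAt f y → f x < f y] := by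
  have := isOrderedAddMonoid_withZero hadd hpos
  have hrep : ∀ k : ℕ, rep (k + 1) x ≤ rep k y ↔
      (k + 1 + 1) • (x : WithZero W) ≤ (k + 1) • (y : WithZero W) := fun k => by
    rw [← WithZero.coe_le_coe, coe_rep, coe_rep]
  tfae_have 1 → 2 := by
    rintro ⟨k, hk⟩
    refine ⟨(k + 1) ^ 2, fun m hm => (hrep m).2 ?_⟩
    exact succ_nsmul_le_nsmul_of_sq_le ((hrep k).1 hk) (by omega)
  tfae_have 2 → 1 := fun ⟨k₀, h⟩ => ⟨k₀, h k₀ le_rfl⟩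
  tfae_have 1 → 3 := by
    rintro ⟨k, hk⟩
    refine ⟨⟨k, ?_⟩, fun f hf => hf.lt_of_rep_le hk⟩
    rw [← WithZero.coe_le_coe, coe_rep]
    exact (le_self_nsmul zero_le (by omega)).trans ((hrep k).1 hk)
  tfae_have 3 → 1 := by
    rintro ⟨⟨N, hN⟩, hlt⟩
    by_contra! hnot
    have hxy : ∀ k : ℕ, ¬ (k + 1) • (x : WithZero W) ≤ k • (y : WithZero W) := fun k hk =>
      hnot (2 * k) ((hrep _).2 (two_mul_add_two_nsmul_le hk))
    obtain ⟨f, hmono, hfy, hfx⟩ :=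
      exists_monotone_addMonoidHom_one_le hxy (by rwa [← coe_rep, WithZero.coe_le_coe])
    have hstate : IsStateAt (fun w : W => f w) y :=
      ⟨fun a b => by simp [WithZero.coe_add], fun _ _ h => hmono (WithZero.coe_le_coe.2 h), hfy⟩
    exact (hlt _ hstate).not_ge (hfy ▸ hfx)
  tfae_finish

end Stmt0
end

section
/- Fix a positive integer n and let W_n be the additive submonoid of the natural numbers generated by n+1 and n+2, equipped with the algebraic order: x ≤ y iff y = x + z for some z ∈ W_n. Then W_n has the n-comparison property: if x, y_0, y_1, …, y_n ∈ W_n satisfy x <_s y_j for every j = 0, …, n, then x ≤ y_0 + y_1 + ⋯ + y_n in W_n. -/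
/-!
Every nonzero element of `W_n` is at least `n + 1`, and every integer `≥ n(n + 1)` lies in `W_n`
(write it as `q(n + 1) + r` with `r ≤ n ≤ q`). If `x ≠ 0` and `x <_s y_j`, then `x < y_j` in `ℕ`,
so `∑ y_j ≥ (n + 1)(x + 1) ≥ x + n(n + 1)`, and the difference `∑ y_j - x` lies in `W_n`.
-/

namespace Stmt6

/-- `Wn n` is the additive submonoid of `ℕ` generated by `n+1` and `n+2`. -/
def Wn (n : ℕ) : AddSubmonoid ℕ := AddSubmonoid.closure {n + 1, n + 2}

/-- The algebraic order on `Wn n`: `x ≤ y` iff `y = x + z` for some `z ∈ Wn n`. -/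
def ordW (n x y : ℕ) : Prop := ∃ z ∈ Wn n, y = x + z

lemma mem_Wn_of_le {n m : ℕ} (h : n * (n + 1) ≤ m) : m ∈ Wn n := by
  have hq : n ≤ m / (n + 1) := (Nat.le_div_iff_mul_le n.succ_pos).mpr (by linarith)
  have hr : m % (n + 1) ≤ n := Nat.lt_succ_iff.mp (Nat.mod_lt _ n.succ_pos)
  have hm : m = (m / (n + 1) - m % (n + 1)) * (n + 1) + m % (n + 1) * (n + 2) := by
    have := Nat.div_add_mod' m (n + 1)
    zify [hq.trans' hr] at this ⊢
    linarith
  have h₁ : n + 1 ∈ Wn n := AddSubmonoid.subset_closure (by simp)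
  have h₂ : n + 2 ∈ Wn n := AddSubmonoid.subset_closure (by simp)
  rw [hm]
  exact add_mem (AddSubmonoid.nsmul_mem _ h₁ _) (AddSubmonoid.nsmul_mem _ h₂ _)

lemma eq_zero_or_succ_le_of_mem_Wn {n x : ℕ} (hx : x ∈ Wn n) : x = 0 ∨ n + 1 ≤ x := by
  induction hx using AddSubmonoid.closure_induction with
  | mem a ha => simp only [Set.mem_insert_iff, Set.mem_singleton_iff] at ha; omega
  | zero => exact .inl rfl
  | add a b _ _ ha hb => omega

lemma ordW.le {n a b : ℕ} (h : ordW n a b) : a ≤ b := by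
  obtain ⟨z, -, rfl⟩ := h
  exact Nat.le_add_right a z

lemma ordW_of_add_le {n x y : ℕ} (h : x + n * (n + 1) ≤ y) : ordW n x y :=
  ⟨y - x, mem_Wn_of_le (by omega), by omega⟩

lemma lt_of_succ_mul_le_mul {x y k : ℕ} (hx : 0 < x) (h : (k + 2) * x ≤ (k + 1) * y) : x < y := by
  by_contra! hyx
  nlinarith [Nat.mul_le_mul_left (k + 1) hyx]

theorem wn_n_comparison_general (n : ℕ)
    (x : ℕ) (hx : x ∈ Wn n)
    (y : Fin (n + 1) → ℕ) (hy : ∀ j, y j ∈ Wn n)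
    (hstd : ∀ j, ∃ k : ℕ, ordW n ((k + 2) * x) ((k + 1) * y j)) :
    ordW n x (∑ j, y j) := by
  rcases eq_zero_or_succ_le_of_mem_Wn hx with rfl | hnx
  · exact ⟨_, sum_mem fun j _ => hy j, (zero_add _).symm⟩
  have hxy : ∀ j, x + 1 ≤ y j := fun j => by
    obtain ⟨k, hk⟩ := hstd j
    exact lt_of_succ_mul_le_mul (by omega) hk.le
  have hsum : (n + 1) * (x + 1) ≤ ∑ j, y j := by
    simpa using Finset.sum_le_sum fun j (_ : j ∈ Finset.univ) => hxy j
  exact ordW_of_add_le (by nlinarith)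

/-- Example 2.22 (first part): for a positive integer `n`, the semigroup `W_n` has the
`n`-comparison property: if `x, y_0, …, y_n ∈ W_n` satisfy `x <_s y_j`
(i.e. `(k+1)·x ≤ k·y_j` in the algebraic order of `W_n` for some positive integer `k`,
encoded as `k+1` below) for every `j`, then `x ≤ y_0 + y_1 + ⋯ + y_n` in `W_n`. -/
theorem wn_n_comparison (n : ℕ) (hn : 0 < n)
    (x : ℕ) (hx : x ∈ Wn n)
    (y : Fin (n + 1) → ℕ) (hy : ∀ j, y j ∈ Wn n)
    (hstd : ∀ j, ∃ k : ℕ, ordW n ((k + 2) * x) ((k + 1) * y j)) :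
    ordW n x (∑ j, y j) :=
  wn_n_comparison_general n x hx y hy hstd

end Stmt6
end

section
/- Fix a positive integer n and let W_n be the additive submonoid of the natural numbers generated by n+1 and n+2, equipped with the algebraic order: x ≤ y iff y = x + z for some z ∈ W_n. Then W_n does not have the (n−1)-comparison property: the elements x = n+1 and y_0 = y_1 = ⋯ = y_{n−1} = n+2 satisfy x <_s y_j for all j, but x ≤ y_0 + y_1 + ⋯ + y_{n−1} fails in W_n (indeed n(n+2) − (n+1) = n² + n − 1 does not lie in W_n). -/
/-!
An element `a (n+1) + b (n+2)` of `W_n` lies between `m (n+1)` and `m (n+2)`, where `m = a + b`.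
These ranges leave the gaps `(m (n+2), (m+1)(n+1))`, and for `m = n - 1` the gap contains
`n² + n - 1 = n(n+2) - (n+1)`.
-/

namespace Stmt7

def Wn (n : ℕ) : AddSubmonoid ℕ := AddSubmonoid.closure {n + 1, n + 2}

/-- `ordW n x y` is `x ≤ y` in the algebraic order of `W_n`. -/
def ordW (n x y : ℕ) : Prop := ∃ z ∈ Wn n, y = x + z

theorem notMem_Wn_of_lt_of_lt {n m x : ℕ} (hlo : m * (n + 2) < x)
    (hhi : x < (m + 1) * (n + 1)) : x ∉ Wn n := by
  rw [Wn, AddSubmonoid.mem_closure_pair]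
  rintro ⟨a, b, rfl⟩
  simp only [smul_eq_mul] at hlo hhi
  rcases le_or_gt (a + b) m with hm | hm
  · have : a * (n + 1) + b * (n + 2) ≤ m * (n + 2) :=
      calc a * (n + 1) + b * (n + 2) ≤ (a + b) * (n + 2) := by nlinarith
        _ ≤ m * (n + 2) := Nat.mul_le_mul_right _ hm
    omega
  · have : (m + 1) * (n + 1) ≤ a * (n + 1) + b * (n + 2) :=
      calc (m + 1) * (n + 1) ≤ (a + b) * (n + 1) := Nat.mul_le_mul_right _ hm
        _ ≤ a * (n + 1) + b * (n + 2) := by nlinarith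
    omega

/-- Example 2.22 (second part): for a positive integer `n`, the semigroup `W_n` fails the
`(n-1)`-comparison property: the elements `x = n+1` and `y_0 = ⋯ = y_{n-1} = n+2` satisfy
`x <_s y_j` (i.e. `(k+1)·x ≤ k·y_j` for some positive integer `k`, encoded `k+1`), but
`x ≤ y_0 + ⋯ + y_{n-1} = n(n+2)` fails in `W_n`; indeed
`n(n+2) - (n+1) = n² + n - 1` does not lie in `W_n`. -/
theorem wn_not_sub_one_comparison (n : ℕ) (hn : 0 < n) :
    (∃ k : ℕ, ordW n ((k + 2) * (n + 1)) ((k + 1) * (n + 2))) ∧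
      ¬ ordW n (n + 1) (n * (n + 2)) ∧
      n ^ 2 + n - 1 ∉ Wn n := by
  obtain ⟨m, rfl⟩ : ∃ m, n = m + 1 := ⟨n - 1, by omega⟩
  have hgap : (m + 1) ^ 2 + (m + 1) - 1 ∉ Wn (m + 1) :=
    notMem_Wn_of_lt_of_lt (m := m) (by ring_nf; omega) (by ring_nf; omega)
  refine ⟨⟨m + 1, 0, (Wn _).zero_mem, by ring⟩, ?_, hgap⟩
  rintro ⟨z, hz, hzeq⟩
  have hz_eq : z = (m + 1) ^ 2 + (m + 1) - 1 := by ring_nf at hzeq ⊢; omega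
  exact hgap (hz_eq ▸ hz)

end Stmt7
end

section
/- Let W_ω = ⊕_{n≥1} W_n be the direct sum (finitely supported sequences) of the semigroups W_n, with coordinatewise addition and coordinatewise order. If x, y⁰, y¹, y², … are elements of W_ω such that x <_s y^j for all j ≥ 0, then there exists k such that x ≤ y⁰ + y¹ + ⋯ + y^k in W_ω. -/
/-!
Every integer `m ≥ n(n+1)` lies in `W_n` (the Frobenius number of `n+1, n+2` is `n(n+1) - 1`), and
every nonzero element of `W_n` is at least `n+1`. If `x <_s y^j`, then `y^j_n ≠ 0` wherever
`x_n ≠ 0`, so `y^j_n ≥ n + 1 ≥ 1` on the (finite) support of `x`. Choosing `K` with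
`K ≥ x_n + n(n+1)` on that support, the difference `∑_{j ≤ K} y^j_n - x_n ≥ n(n+1)` lies in `W_n`.
-/

namespace Stmt8

/-- `Wn n` is the additive submonoid of `ℕ` generated by `n+1` and `n+2`. -/
def Wn (n : ℕ) : AddSubmonoid ℕ := AddSubmonoid.closure {n + 1, n + 2}

/-- The algebraic order on `Wn n`: `x ≤ y` iff `y = x + z` for some `z ∈ Wn n`. -/
def ordW (n x y : ℕ) : Prop := ∃ z ∈ Wn n, y = x + z

/-- Membership in `W_ω = ⊕_{n≥1} W_n`: a finitely supported sequence whose `i`-th entry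
(`i = 0, 1, 2, …`, representing `n = i+1`) lies in `W_{i+1}`. -/
def MemWomega (x : ℕ → ℕ) : Prop :=
  (∀ i, x i ∈ Wn (i + 1)) ∧ Set.Finite {i | x i ≠ 0}

/-- The coordinatewise order on `W_ω`, each coordinate carrying the algebraic order of
`W_{i+1}`. -/
def leWomega (x y : ℕ → ℕ) : Prop := ∀ i, ordW (i + 1) (x i) (y i)

section Wn

variable {n a b m : ℕ}

theorem mem_Wn_of_mul_succ_le (h : n * (n + 1) ≤ m) : m ∈ Wn n := by
  have hgen₁ : n + 1 ∈ Wn n := AddSubmonoid.subset_closure (Or.inl rfl)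
  have hgen₂ : n + 2 ∈ Wn n := AddSubmonoid.subset_closure (Or.inr rfl)
  set q := m / (n + 1)
  set r := m % (n + 1)
  have hr : r < n + 1 := Nat.mod_lt _ n.succ_pos
  have hq : n ≤ q := (Nat.le_div_iff_mul_le n.succ_pos).2 h
  have hm : m = (q - r) * (n + 1) + r * (n + 2) := by
    have hdiv : (n + 1) * q + r = m := Nat.div_add_mod m (n + 1)
    zify [show r ≤ q by omega] at hdiv ⊢
    linear_combination -hdiv
  rw [hm, ← smul_eq_mul, ← smul_eq_mul]
  exact add_mem (nsmul_mem hgen₁ _) (nsmul_mem hgen₂ _)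

theorem eq_zero_or_succ_le_of_mem_Wn (hm : m ∈ Wn n) : m = 0 ∨ n + 1 ≤ m := by
  induction hm using AddSubmonoid.closure_induction with
  | mem a ha =>
    simp only [Set.mem_insert_iff, Set.mem_singleton_iff] at ha
    omega
  | zero => exact Or.inl rfl
  | add a b _ _ ha hb => omega

theorem le_of_ordW (h : ordW n a b) : a ≤ b := by
  obtain ⟨z, -, rfl⟩ := h
  exact Nat.le_add_right a z

theorem ordW_zero_left (hb : b ∈ Wn n) : ordW n 0 b := ⟨b, hb, (zero_add b).symm⟩

theorem ordW_of_add_mul_succ_le (h : a + n * (n + 1) ≤ b) : ordW n a b :=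
  ⟨b - a, mem_Wn_of_mul_succ_le (by omega), by omega⟩

theorem succ_le_of_ordW_mul {c d : ℕ} (hb : b ∈ Wn n) (hc : c ≠ 0) (ha : a ≠ 0)
    (h : ordW n (c * a) (d * b)) : n + 1 ≤ b := by
  have hb₀ : b ≠ 0 := by
    rintro rfl
    have := le_of_ordW h
    simp_all
  exact (eq_zero_or_succ_le_of_mem_Wn hb).resolve_left hb₀

end Wn

/-- Example 2.22 (third part): `W_ω = ⊕_{n≥1} W_n` has the ω-comparison property: if
`x, y⁰, y¹, … ∈ W_ω` satisfy `x <_s y^j` for all `j` (i.e. `(k+1)·x ≤ k·y^j` for some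
positive integer `k`, encoded `k+1`), then `x ≤ y⁰ + y¹ + ⋯ + y^K` for some `K`. -/
theorem womega_omega_comparison
    (x : ℕ → ℕ) (hx : MemWomega x)
    (y : ℕ → ℕ → ℕ) (hy : ∀ j, MemWomega (y j))
    (hstd : ∀ j, ∃ k : ℕ,
      leWomega (fun i => (k + 2) * x i) (fun i => (k + 1) * y j i)) :
    ∃ K : ℕ, leWomega x (fun i => ∑ j ∈ Finset.range (K + 1), y j i) := by
  obtain ⟨K, hK⟩ := (hx.2.image fun i => x i + (i + 1) * (i + 1 + 1)).bddAbove
  refine ⟨K, fun i => ?_⟩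
  beta_reduce
  by_cases hxi : x i = 0
  · rw [hxi]
    exact ordW_zero_left (sum_mem fun j _ => (hy j).1 i)
  have hy_pos : ∀ j, 1 ≤ y j i := fun j => by
    obtain ⟨k, hk⟩ := hstd j
    have := succ_le_of_ordW_mul ((hy j).1 i) (k + 1).succ_ne_zero hxi (hk i)
    omega
  have hsum : K + 1 ≤ ∑ j ∈ Finset.range (K + 1), y j i := by
    simpa using Finset.card_nsmul_le_sum (Finset.range (K + 1)) _ 1 fun j _ => hy_pos j
  have hxK : x i + (i + 1) * (i + 1 + 1) ≤ K := hK ⟨i, hxi, rfl⟩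
  exact ordW_of_add_mul_succ_le (by omega)

end Stmt8
end

section
/- Let W_ω = ⊕_{n≥1} W_n be the direct sum (finitely supported sequences) of the semigroups W_n, with coordinatewise addition and coordinatewise order. Then W_ω does not have the n-comparison property for any positive integer n: for every n there exist elements x, y_0, y_1, …, y_n ∈ W_ω with x <_s y_j for all j = 0, …, n, but x ≤ y_0 + y_1 + ⋯ + y_n fails. -/
namespace Stmt9

/-- `Wn n` is the additive submonoid of `ℕ` generated by `n+1` and `n+2`. -/
def Wn (n : ℕ) : AddSubmonoid ℕ := AddSubmonoid.closure {n + 1, n + 2}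

/-- The algebraic order on `Wn n`: `x ≤ y` iff `y = x + z` for some `z ∈ Wn n`. -/
def ordW (n x y : ℕ) : Prop := ∃ z ∈ Wn n, y = x + z

/-- Membership in `W_ω = ⊕_{n≥1} W_n`: a finitely supported sequence whose `i`-th entry
(`i = 0, 1, 2, …`, representing `n = i+1`) lies in `W_{i+1}`. -/
def MemWomega (x : ℕ → ℕ) : Prop :=
  (∀ i, x i ∈ Wn (i + 1)) ∧ Set.Finite {i | x i ≠ 0}

/-- The coordinatewise order on `W_ω`, each coordinate carrying the algebraic order of
`W_{i+1}`. -/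
def leWomega (x y : ℕ → ℕ) : Prop := ∀ i, ordW (i + 1) (x i) (y i)

/-! In the single coordinate `W_{n+1} = ⟨n+2, n+3⟩` take `x = n+2` and every `y_j = n+3`.
Then `(n+3)·x = (n+2)·y_j`, so `x <_s y_j`, but `∑ y_j - x = n(n+2) + (n+1)` is the Frobenius
number of `⟨n+2, n+3⟩`, hence `x ≰ ∑ y_j`. -/

/-- `q·m + r` with `q < r < m` is a gap of `⟨m, m+1⟩`: an element `a·m + b·(m+1) = (a+b)·m + b`
with `b ≤ a+b` is below it when `a + b ≤ q` and above it otherwise. -/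
theorem mul_add_notMem_closure_pair_succ {m q r : ℕ} (hqr : q < r) (hrm : r < m) :
    q * m + r ∉ AddSubmonoid.closure ({m, m + 1} : Set ℕ) := by
  rw [AddSubmonoid.mem_closure_pair]
  rintro ⟨a, b, hab⟩
  simp only [smul_eq_mul] at hab
  rcases le_or_gt (a + b) q with hs | hs
  · nlinarith
  · nlinarith

theorem ordW_self (n a : ℕ) : ordW n a a := ⟨0, zero_mem _, rfl⟩

theorem ordW.sub_mem {n a b : ℕ} (h : ordW n a b) : b - a ∈ Wn n := by
  obtain ⟨z, hz, rfl⟩ := h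
  simpa using hz

theorem memWomega_single {i a : ℕ} (ha : a ∈ Wn (i + 1)) : MemWomega (Pi.single i a) := by
  refine ⟨fun j => ?_, (Set.finite_singleton i).subset Pi.support_single_subset⟩
  by_cases h : j = i
  · subst h
    simpa using ha
  · simp [h]

theorem leWomega_single_iff {i a b : ℕ} :
    leWomega (Pi.single i a) (Pi.single i b) ↔ ordW (i + 1) a b := by
  refine ⟨fun h => by simpa using h i, fun h j => ?_⟩
  by_cases hj : j = i
  · subst hj
    simp [h]
  · simpa [hj] using ordW_self _ 0

theorem mul_single_eq_single_mul (i c a : ℕ) :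
    (fun j => c * (Pi.single i a : ℕ → ℕ) j) = Pi.single i (c * a) :=
  (Pi.single_smul' i c a).symm

theorem sum_const_single_eq_single_mul (i k b : ℕ) :
    (fun j => ∑ _l : Fin k, (Pi.single i b : ℕ → ℕ) j) = Pi.single i (k * b) := by
  simp only [Finset.sum_const, Finset.card_univ, Fintype.card_fin, smul_eq_mul]
  exact mul_single_eq_single_mul i k b

theorem womega_not_n_comparison_general (n : ℕ) :
    ∃ (x : ℕ → ℕ) (y : Fin (n + 1) → ℕ → ℕ),
      MemWomega x ∧ (∀ j, MemWomega (y j)) ∧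
      (∀ j, ∃ k : ℕ,
        leWomega (fun i => (k + 2) * x i) (fun i => (k + 1) * y j i)) ∧
      ¬ leWomega x (fun i => ∑ j, y j i) := by
  have hx : n + 2 ∈ Wn (n + 1) := AddSubmonoid.subset_closure (by simp)
  have hy : n + 3 ∈ Wn (n + 1) := AddSubmonoid.subset_closure (by simp)
  refine ⟨Pi.single n (n + 2), fun _ => Pi.single n (n + 3), memWomega_single hx,
    fun _ => memWomega_single hy, fun _ => ⟨n + 1, ?_⟩, ?_⟩
  · rw [mul_single_eq_single_mul, mul_single_eq_single_mul, leWomega_single_iff,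
      show (n + 1 + 1) * (n + 3) = (n + 1 + 2) * (n + 2) by ring]
    exact ordW_self _ _
  · rw [sum_const_single_eq_single_mul, leWomega_single_iff]
    intro hle
    have hdiff : (n + 1) * (n + 3) - (n + 2) = n * (n + 2) + (n + 1) :=
      Nat.sub_eq_of_eq_add (by ring)
    have hmem := hle.sub_mem
    rw [hdiff] at hmem
    exact mul_add_notMem_closure_pair_succ (Nat.lt_succ_self n) (Nat.lt_succ_self _) hmem

/-- Example 2.22 (fourth part): `W_ω = ⊕_{n≥1} W_n` fails the `n`-comparison property
for every positive integer `n`: there are `x, y_0, …, y_n ∈ W_ω` with `x <_s y_j` for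
all `j` (i.e. `(k+1)·x ≤ k·y_j` for some positive integer `k`, encoded `k+1`), but
`x ≤ y_0 + y_1 + ⋯ + y_n` fails. -/
theorem womega_not_n_comparison (n : ℕ) (hn : 0 < n) :
    ∃ (x : ℕ → ℕ) (y : Fin (n + 1) → ℕ → ℕ),
      MemWomega x ∧ (∀ j, MemWomega (y j)) ∧
      (∀ j, ∃ k : ℕ,
        leWomega (fun i => (k + 2) * x i) (fun i => (k + 1) * y j i)) ∧
      ¬ leWomega x (fun i => ∑ j, y j i) :=
  womega_not_n_comparison_general n

end Stmt9
end

section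
/- Let A be a C*-algebra and let (e_k) be an increasing approximate unit for A consisting of positive contractions. Then for every positive element a ∈ A and every ε > 0, one has (a−ε)₊ ≾ e_k for all sufficiently large k. -/
open Filter Topology

namespace Stmt12

variable {A : Type*} [NonUnitalCStarAlgebra A] [PartialOrder A] [StarOrderedRing A]

/-- `(a - ε)₊`, via the continuous functional calculus with `t ↦ max (t - ε) 0`. -/
noncomputable def cutoff (a : A) (ε : ℝ) : A := cfcₙ (fun t : ℝ => max (t - ε) 0) a

/-- Cuntz subequivalence `a ≾ b` inside `A`: there is a sequence `(x m)` with
`‖x m⋆ * b * x m - a‖ → 0`. -/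
def CuntzLe (a b : A) : Prop :=
  ∃ x : ℕ → A, Tendsto (fun m => ‖star (x m) * b * x m - a‖) atTop (nhds 0)

/-! With `g(t) = √t / (t + η)` and `x = g(c) s`, the defect `star s * s - star x * c * x` is
`star (r s) (r s)` for `r = (1 - g(c) c g(c))^{1/2}`, so its norm is
`‖r (s star s) r‖ ≤ ‖r c r‖ ≤ sup_t t (1 - g(t) t g(t)) ≤ 2η` as soon as `s star s ≤ c`;
hence `star s * s ≾ c`, and in particular `d ≤ c` implies `d ≾ c`.
For the approximate unit, `b = √a e_k √a → a`; once `‖a - b‖ < ε`, conjugating `a - ‖a - b‖ ≤ b`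
by `h(a)`, where `h(t)² (t - ‖a - b‖) = (t - ε)₊`, gives `(a - ε)₊ ≤ h b h = star y e_k y` with
`y = √a h`. -/

lemma sqrt_div_add_mul_self_mul {η t : ℝ} (ht : 0 ≤ t) :
    √t / (t + η) * t * (√t / (t + η)) = (t / (t + η)) ^ 2 := by
  have hsq : √t * √t = t := Real.mul_self_sqrt ht
  rw [div_pow, div_mul_eq_mul_div, div_mul_eq_mul_div, mul_div_assoc', div_div, mul_comm (√t * t),
    ← mul_assoc, hsq, ← sq, ← sq]

lemma sqrt_div_add_mul_self_mul_le_one {η t : ℝ} (hη : 0 < η) (ht : 0 ≤ t) :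
    √t / (t + η) * t * (√t / (t + η)) ≤ 1 := by
  rw [sqrt_div_add_mul_self_mul ht]
  exact pow_le_one₀ (by positivity) ((div_le_one (by positivity)).mpr (by linarith))

lemma mul_one_sub_sqrt_div_add_mul_self_mul_le {η t : ℝ} (hη : 0 < η) (ht : 0 ≤ t) :
    t * (1 - √t / (t + η) * t * (√t / (t + η))) ≤ 2 * η := by
  rw [sqrt_div_add_mul_self_mul ht, div_pow, one_sub_div (by positivity), mul_div_assoc',
    div_le_iff₀ (by positivity)]
  nlinarith [mul_nonneg ht hη.le, mul_nonneg (mul_nonneg ht hη.le) hη.le, pow_pos hη 3]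

lemma sq_sqrt_div_max_mul_sub {δ ε : ℝ} (hδε : δ < ε) (t : ℝ) :
    √(max (t - ε) 0 / max (t - δ) (ε - δ)) ^ 2 * (t - δ) = max (t - ε) 0 := by
  rcases le_or_gt t ε with htε | htε
  · simp [max_eq_right (sub_nonpos.mpr htε)]
  · rw [max_eq_left (by linarith), max_eq_left (by linarith),
      Real.sq_sqrt (div_nonneg (by linarith) (by linarith)), div_mul_cancel₀ _ (by linarith)]

lemma cfc_mul_mul_cfc {B : Type*} [CStarAlgebra B] {c : B} (hc : IsSelfAdjoint c) {f : ℝ → ℝ}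
    (hf : ContinuousOn f (spectrum ℝ c)) :
    cfc f c * c * cfc f c = cfc (fun t => f t * t * f t) c := by
  rw [cfc_mul (fun t => f t * t) f c (hf.mul continuousOn_id) hf, cfc_mul f (fun t => t) c hf,
    cfc_id' ℝ c hc]

lemma cfcₙ_mul_mul_cfcₙ {B : Type*} [NonUnitalCStarAlgebra B] {a : B} (ha : IsSelfAdjoint a)
    {f : ℝ → ℝ} (hf : ContinuousOn f (quasispectrum ℝ a)) (hf0 : f 0 = 0) :
    cfcₙ f a * a * cfcₙ f a = cfcₙ (fun t => f t * t * f t) a := by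
  rw [cfcₙ_mul (fun t => f t * t) f a (hf.mul continuousOn_id) (by simp [hf0]) hf hf0,
    cfcₙ_mul f (fun t => t) a hf hf0, cfcₙ_id' ℝ a ha]

lemma norm_star_mul_star_mul_self_mul_le_of_mul_star_le {s c : A} (hsc : s * star s ≤ c) (r : A) :
    ‖star s * (star r * r) * s‖ ≤ ‖r * c * star r‖ := by
  have hconj : star s * (star r * r) * s = star (r * s) * (r * s) := by
    simp only [star_mul, mul_assoc]
  have hswap : r * s * star (r * s) = r * (s * star s) * star r := by
    simp only [star_mul, mul_assoc]
  rw [hconj, CStarRing.norm_star_mul_self, ← CStarRing.norm_self_mul_star, hswap]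
  exact CStarAlgebra.norm_le_norm_of_nonneg_of_le
    (star_right_conjugate_nonneg (mul_star_self_nonneg s) r)
    (star_right_conjugate_le_conjugate hsc r)

lemma norm_star_mul_cfc_mul_sub_le {B : Type*} [CStarAlgebra B] [PartialOrder B]
    [StarOrderedRing B] {c s : B} (hsc : s * star s ≤ c) {g : ℝ → ℝ}
    (hg : ContinuousOn g (Set.Ici 0)) {δ : ℝ} (hg_le : ∀ t, 0 ≤ t → g t * t * g t ≤ 1)
    (hδ : ∀ t, 0 ≤ t → t * (1 - g t * t * g t) ≤ δ) :
    ‖star (cfc g c * s) * c * (cfc g c * s) - star s * s‖ ≤ δ := by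
  have hc : 0 ≤ c := (mul_star_self_nonneg s).trans hsc
  have hspec : spectrum ℝ c ⊆ Set.Ici 0 := fun t ht => spectrum_nonneg_of_nonneg hc ht
  have hgc : ContinuousOn g (spectrum ℝ c) := hg.mono hspec
  set ψ : ℝ → ℝ := fun t => 1 - g t * t * g t
  have hψc : ContinuousOn ψ (spectrum ℝ c) :=
    continuousOn_const.sub ((hgc.mul continuousOn_id).mul hgc)
  set r := cfc (fun t => √(ψ t)) c
  have hr : IsSelfAdjoint r := cfc_predicate _ c
  have hrr : star r * r = 1 - cfc g c * c * cfc g c := by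
    rw [hr.star_eq, ← cfc_mul _ _ c hψc.sqrt hψc.sqrt, cfc_mul_mul_cfc hc.isSelfAdjoint hgc,
      ← cfc_one ℝ c, ← cfc_sub _ _ c]
    exact cfc_congr fun t ht => Real.mul_self_sqrt (sub_nonneg.mpr (hg_le t (hspec ht)))
  have hrcr : r * c * star r = cfc (fun t => √(ψ t) * t * √(ψ t)) c := by
    rw [hr.star_eq, cfc_mul_mul_cfc hc.isSelfAdjoint hψc.sqrt]
  calc ‖star (cfc g c * s) * c * (cfc g c * s) - star s * s‖
      = ‖star s * (star r * r) * s‖ := by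
        rw [← norm_neg, hrr, star_mul, (cfc_predicate g c).star_eq]
        simp only [mul_sub, sub_mul, mul_one, mul_assoc, neg_sub]
    _ ≤ ‖r * c * star r‖ := norm_star_mul_star_mul_self_mul_le_of_mul_star_le hsc r
    _ ≤ δ := by
      rw [hrcr]
      refine norm_cfc_le (by simpa using hδ 0 le_rfl) fun t ht => ?_
      have ht0 : 0 ≤ t := hspec ht
      have hψt : 0 ≤ ψ t := sub_nonneg.mpr (hg_le t ht0)
      rw [Real.norm_of_nonneg (by positivity), mul_comm, ← mul_assoc, Real.mul_self_sqrt hψt,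
        mul_comm]
      exact hδ t ht0

lemma cutoff_nonneg (a : A) (ε : ℝ) : 0 ≤ cutoff a ε :=
  cfcₙ_nonneg fun _ _ => le_max_right _ _

lemma exists_cutoff_le_star_mul_mul {a b : A} (ha : IsSelfAdjoint a) (hb : IsSelfAdjoint b) {ε : ℝ}
    (hab : ‖a - b‖ < ε) : ∃ h : A, cutoff a ε ≤ star h * b * h := by
  set δ := ‖a - b‖
  have hε : 0 < ε := (norm_nonneg _).trans_lt hab
  set H : ℝ → ℝ := fun t => √(max (t - ε) 0 / max (t - δ) (ε - δ))
  have hH0 : H 0 = 0 := by simp [H, hε.le]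
  have hHc : Continuous H := by
    refine Real.continuous_sqrt.comp (.div (by fun_prop) (by fun_prop) fun t => ?_)
    exact (lt_max_of_lt_right (sub_pos.mpr hab)).ne'
  set h := cfcₙ H a
  have hh : IsSelfAdjoint h := cfcₙ_predicate H a
  have hcutoff : cutoff a ε = star h * a * h - δ • (star h * h) := by
    have hHH : Continuous fun t => H t * H t := hHc.mul hHc
    rw [hh.star_eq, cfcₙ_mul_mul_cfcₙ ha hHc.continuousOn hH0,
      ← cfcₙ_mul H H a hHc.continuousOn hH0 hHc.continuousOn hH0,
      ← cfcₙ_smul δ _ a hHH.continuousOn (by simp [hH0]),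
      ← cfcₙ_sub _ _ a (by fun_prop) (by simp [hH0]) (by fun_prop) (by simp [hH0]), cutoff]
    refine cfcₙ_congr fun t _ => ?_
    rw [← sq_sqrt_div_max_mul_sub hab t]
    simp only [smul_eq_mul, H]
    ring
  refine ⟨h, ?_⟩
  have hconj : star h * (a - b) * h ≤ δ • (star h * h) :=
    CStarAlgebra.star_left_conjugate_le_norm_smul (ha.sub hb)
  rwa [hcutoff, sub_le_comm, ← sub_mul, ← mul_sub]

theorem CuntzLe.star_mul_self_of_mul_star_le {s c : A} (hsc : s * star s ≤ c) :
    CuntzLe (star s * s) c := by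
  set η : ℕ → ℝ := fun n => 1 / (n + 1)
  have hη : ∀ n, 0 < η n := fun n => by positivity
  have hη_lim : Tendsto (fun n => 2 * η n) atTop (𝓝 0) := by
    simpa [η] using tendsto_one_div_add_atTop_nhds_zero_nat.const_mul (2 : ℝ)
  refine ⟨fun n => cfcₙ (fun t => √t / (t + η n)) c * s,
    squeeze_zero (fun _ => norm_nonneg _) (fun n => ?_) hη_lim⟩
  have hsc' : (s : Unitization ℂ A) * star (s : Unitization ℂ A) ≤ c := by
    rwa [← Unitization.inr_star, ← Unitization.inr_mul, Unitization.inr_le_iff _ _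
      (.mul_star_self s) ((mul_star_self_nonneg s).trans hsc).isSelfAdjoint]
  have hg : ContinuousOn (fun t => √t / (t + η n)) (Set.Ici 0) :=
    Real.continuous_sqrt.continuousOn.div (by fun_prop) fun t ht =>
      (add_pos_of_nonneg_of_pos ht (hη n)).ne'
  have := norm_star_mul_cfc_mul_sub_le hsc' hg
    (fun t ht => sqrt_div_add_mul_self_mul_le_one (hη n) ht)
    (fun t ht => mul_one_sub_sqrt_div_add_mul_self_mul_le (hη n) ht)
  rw [← Unitization.real_cfcₙ_eq_cfc_inr c _ (by simp)] at this
  rw [← Unitization.norm_inr (𝕜 := ℂ)]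
  exact_mod_cast this

theorem CuntzLe.of_le {d c : A} (hd : 0 ≤ d) (h : d ≤ c) : CuntzLe d c := by
  have hs : IsSelfAdjoint (CFC.sqrt d) := (CFC.sqrt_nonneg d).isSelfAdjoint
  simpa only [hs.star_eq, CFC.sqrt_mul_sqrt_self d hd] using
    CuntzLe.star_mul_self_of_mul_star_le (s := CFC.sqrt d)
      (by rwa [hs.star_eq, CFC.sqrt_mul_sqrt_self d hd])

theorem CuntzLe.of_star_mul_mul {B : Type*} [NonUnitalCStarAlgebra B] {d c y : B}
    (h : CuntzLe d (star y * c * y)) : CuntzLe d c := by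
  obtain ⟨x, hx⟩ := h
  exact ⟨fun m => y * x m, by simpa only [star_mul, mul_assoc] using hx⟩

theorem cutoff_cuntzLe_approximateUnit_general
    {ι : Type*} [Preorder ι] (e : ι → A) (he_pos : ∀ k, 0 ≤ e k)
    (he_unit : ∀ a : A, Tendsto (fun k => e k * a) atTop (nhds a))
    (a : A) (ha : 0 ≤ a) (ε : ℝ) (hε : 0 < ε) :
    ∀ᶠ k in atTop, CuntzLe (cutoff a ε) (e k) := by
  set s := CFC.sqrt a
  have hs : IsSelfAdjoint s := (CFC.sqrt_nonneg a).isSelfAdjoint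
  have hconv : Tendsto (fun k => s * e k * s) atTop (𝓝 a) := by
    have hss : s * s = a := CFC.sqrt_mul_sqrt_self a ha
    simpa only [mul_assoc, hss] using (he_unit s).const_mul s
  filter_upwards [(tendsto_iff_norm_sub_tendsto_zero.mp hconv).eventually (gt_mem_nhds hε)]
    with k hk
  have hb : IsSelfAdjoint (s * e k * s) := by
    simpa only [hs.star_eq] using (he_pos k).isSelfAdjoint.conjugate s
  obtain ⟨h, hle⟩ := exists_cutoff_le_star_mul_mul ha.isSelfAdjoint hb (by rwa [norm_sub_rev])
  refine CuntzLe.of_star_mul_mul (y := s * h) ?_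
  rw [star_mul, hs.star_eq, mul_assoc]
  simpa only [mul_assoc] using CuntzLe.of_le (cutoff_nonneg a ε) hle

/-- Lemma 5.1(i): if `(e k)` is an increasing approximate unit of positive contractions
for `A`, then for every positive `a ∈ A` and every `ε > 0` one has `(a - ε)₊ ≾ e k` for
all sufficiently large `k`. -/
theorem cutoff_cuntzLe_approximateUnit
    {ι : Type*} [Preorder ι] [IsDirected ι (· ≤ ·)] [Nonempty ι]
    (e : ι → A) (he_mono : Monotone e)
    (he_pos : ∀ k, 0 ≤ e k) (he_contr : ∀ k, ‖e k‖ ≤ 1)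
    (he_unit : ∀ a : A, Tendsto (fun k => e k * a) atTop (nhds a))
    (a : A) (ha : 0 ≤ a) (ε : ℝ) (hε : 0 < ε) :
    ∀ᶠ k in atTop, CuntzLe (cutoff a ε) (e k) :=
  cutoff_cuntzLe_approximateUnit_general e he_pos he_unit a ha ε hε

end Stmt12
end

section
/- Let A be a separable C*-algebra with property (S). Then A has no non-zero unital quotients: for every closed two-sided ideal I of A, if the quotient C*-algebra A/I has a unit, then A/I = 0. -/
open Filter Topology Matrix

namespace Stmt15

variable {A : Type*} [NonUnitalCStarAlgebra A] [PartialOrder A] [StarOrderedRing A]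

/-- `a ⊗ 1ₙ`: the block-diagonal matrix `diag (a, …, a)` (`n` copies). -/
def tensorOne {B : Type*} [Zero B] (d : B) (n : ℕ) : Matrix (Fin n) (Fin n) B :=
  Matrix.diagonal fun _ => d

/-- Cuntz subequivalence `a ≾ b` for `a ∈ M_p(A)`, `b ∈ M_q(A)`: there is a sequence
`(x k)` of `q × p` matrices with `(x k)ᴴ * b * (x k) → a`. -/
def CuntzLeMat {p q : ℕ} (a : Matrix (Fin p) (Fin p) A) (b : Matrix (Fin q) (Fin q) A) :
    Prop :=
  ∃ x : ℕ → Matrix (Fin q) (Fin p) A,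
    Tendsto (fun k => (x k)ᴴ * b * (x k)) atTop (nhds a)

/-- `a ≺_s b`: `a ⊗ 1_{k+1} ≾ b ⊗ 1_k` for some positive integer `k`
(encoded as `k + 1` with `k : ℕ`). -/
def PrecS (a b : A) : Prop :=
  ∃ k : ℕ, CuntzLeMat (tensorOne a (k + 2)) (tensorOne b (k + 1))

/-- `F(A)`: the set of positive `a ∈ A` with `e * a = a` for some positive `e ∈ A`. -/
def Fset (A : Type*) [NonUnitalCStarAlgebra A] [PartialOrder A] [StarOrderedRing A] :
    Set A :=
  {a : A | 0 ≤ a ∧ ∃ e : A, 0 ≤ e ∧ e * a = a}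

/-- Property (S): for every `a ∈ F(A)` there is a positive `b ∈ A` with `a * b = 0` and
`a ≺_s b`. -/
def PropS (A : Type*) [NonUnitalCStarAlgebra A] [PartialOrder A] [StarOrderedRing A] :
    Prop :=
  ∀ a ∈ Fset A, ∃ b : A, 0 ≤ b ∧ a * b = 0 ∧ PrecS a b

end Stmt15

/-! If `u` lifts the unit of `A/I`, then so does the positive element `a = u⋆u`, because closed
ideals of C⋆-algebras are self-adjoint; here one writes `x⋆ = lim (c/(c+ε)) x⋆` with `c = x⋆x`.
Functional calculus turns `a` into `h = (2a - 1)₊ ∈ F(A)` with `h ≡ a` modulo `I`. Property (S)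
gives `b ≥ 0` with `hb = 0` and `h ≺_s b`. Since `h` is a left unit modulo `I`, `b ≡ hb = 0`, so
`b ∈ I`; as `I` is closed, the limit defining `h ≺_s b` keeps `h` in `I`, and a unit of `A/I` lying
in `I` forces `I = A`. -/

namespace TwoSidedIdeal

variable {R : Type*} [NonUnitalRing R] {I : TwoSidedIdeal R}

lemma forall_mul_sub_mem_of_sub_mem {e e' : R} (he : ∀ y, e * y - y ∈ I) (he' : e' - e ∈ I)
    (y : R) : e' * y - y ∈ I := by
  have := I.add_mem (I.mul_mem_right _ y he') (he y)
  rwa [sub_mul, sub_add_sub_cancel] at this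

lemma mem_of_forall_mul_sub_mem {e : R} (he : ∀ y, e * y - y ∈ I) (heI : e ∈ I) (y : R) :
    y ∈ I := by
  simpa using I.sub_mem (I.mul_mem_right e y heI) (he y)

end TwoSidedIdeal

lemma mul_one_sub_div_add_sq_le {t ε : ℝ} (ht : 0 ≤ t) (hε : 0 < ε) :
    ‖t * (1 - t / (t + ε)) ^ 2‖ ≤ ε := by
  have hpos : 0 < t + ε := by positivity
  have : t * (1 - t / (t + ε)) ^ 2 = ε * (t * ε / (t + ε) ^ 2) := by field_simp; ring
  rw [this, Real.norm_of_nonneg (by positivity)]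
  refine mul_le_of_le_one_right hε.le ((div_le_one (by positivity)).2 ?_)
  nlinarith

section CStarAlgebra

variable {A : Type*} [NonUnitalCStarAlgebra A]

lemma norm_sub_mul_cfcₙ_star_mul_self_sq_le (x : A) {g : ℝ → ℝ}
    (hg : ContinuousOn g (quasispectrum ℝ (star x * x))) (hg0 : g 0 = 0) {C : ℝ}
    (hC : ∀ t ∈ quasispectrum ℝ (star x * x), ‖t * (1 - g t) ^ 2‖ ≤ C) :
    ‖x - x * cfcₙ g (star x * x)‖ ^ 2 ≤ C := by
  set c := star x * x
  set G := cfcₙ g c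
  have hG : star G = G := (cfcₙ_predicate g c).star_eq
  have hcfc : cfcₙ (fun t => t * (1 - g t) ^ 2) c = c - c * G - G * c + G * c * G := by
    have : (fun t => t * (1 - g t) ^ 2) = fun t => t - t * g t - g t * t + g t * t * g t := by
      funext t; ring
    rw [this, cfcₙ_add (fun t => t - t * g t - g t * t) (fun t => g t * t * g t) c,
      cfcₙ_sub (fun t => t - t * g t) (fun t => g t * t) c,
      cfcₙ_sub (fun t => t) (fun t => t * g t) c, cfcₙ_mul (fun t => g t * t) g c,
      cfcₙ_mul g (fun t => t) c, cfcₙ_mul (fun t => t) g c, cfcₙ_id' ℝ c]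
  calc ‖x - x * G‖ ^ 2 = ‖star (x - x * G) * (x - x * G)‖ := by
        rw [CStarRing.norm_star_mul_self, sq]
    _ = ‖cfcₙ (fun t => t * (1 - g t) ^ 2) c‖ := by
        rw [hcfc, star_sub, star_mul, hG, show c = star x * x from rfl]; noncomm_ring
    _ ≤ C := norm_cfcₙ_le hC

namespace TwoSidedIdeal

variable {I : TwoSidedIdeal A}

lemma cfcₙ_sub_one_mul_mem {a : A} (ha : IsSelfAdjoint a)
    (he : ∀ y, a * y - y ∈ I) {g : ℝ → ℝ} (hg : ContinuousOn g (quasispectrum ℝ a))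
    (hg0 : g 0 = 0) : cfcₙ (fun t => (t - 1) * g t) a ∈ I := by
  have : (fun t : ℝ => (t - 1) * g t) = fun t => t * g t - g t := by
    funext t; ring
  rw [this, cfcₙ_sub (fun t => t * g t) g a, cfcₙ_mul (fun t => t) g a, cfcₙ_id' ℝ a]
  exact he _

variable [PartialOrder A] [StarOrderedRing A]

lemma cfcₙ_div_add_star_mul_self_mem {x : A} (hx : x ∈ I) {ε : ℝ} (hε : 0 < ε) :
    cfcₙ (fun t : ℝ => t / (t + ε)) (star x * x) ∈ I := by
  set g : ℝ → ℝ := fun t => t / (t + ε)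
  set c := star x * x
  have hσ : ∀ t ∈ quasispectrum ℝ c, 0 ≤ t :=
    quasispectrum_nonneg_of_nonneg c (star_mul_self_nonneg x)
  have hg : ContinuousOn g (quasispectrum ℝ c) :=
    continuousOn_id.div (by fun_prop) fun t ht => (add_pos_of_nonneg_of_pos (hσ t ht) hε).ne'
  -- `g = ε⁻¹ (id - id * g)` exhibits `cfcₙ g c` as a multiple of `x`
  have hG : cfcₙ g c = (ε⁻¹ • star x) * (x - x * cfcₙ g c) := by
    have : (ε⁻¹ • star x) * (x - x * cfcₙ g c) = cfcₙ (fun t => ε⁻¹ • (t - t * g t)) c := by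
      rw [cfcₙ_smul ε⁻¹ (fun t => t - t * g t) c, cfcₙ_sub (fun t => t) (fun t => t * g t) c,
        cfcₙ_mul (fun t => t) g c, cfcₙ_id' ℝ c, smul_mul_assoc, mul_sub, mul_assoc]
    refine this ▸ cfcₙ_congr fun t ht => ?_
    have := add_pos_of_nonneg_of_pos (hσ t ht) hε
    simp only [g, smul_eq_mul]
    field_simp
    ring
  rw [hG]
  exact I.mul_mem_left _ _ (I.sub_mem hx (I.mul_mem_right _ _ hx))

lemma star_mem_of_isClosed (hI : IsClosed (I : Set A)) {x : A} (hx : x ∈ I) : star x ∈ I := by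
  refine hI.closure_subset (Metric.mem_closure_iff.2 fun δ hδ => ?_)
  have hε : 0 < δ ^ 2 / 2 := by positivity
  have hc₀ : 0 ≤ star x * x := star_mul_self_nonneg x
  have hσ : ∀ t ∈ quasispectrum ℝ (star x * x), 0 ≤ t := quasispectrum_nonneg_of_nonneg _ hc₀
  set G := cfcₙ (fun t : ℝ => t / (t + δ ^ 2 / 2)) (star x * x)
  have hG : IsSelfAdjoint G := cfcₙ_predicate _ _
  refine ⟨G * star x, I.mul_mem_right _ _ (cfcₙ_div_add_star_mul_self_mem hx hε), ?_⟩
  have hsq : ‖x - x * G‖ ^ 2 ≤ δ ^ 2 / 2 :=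
    norm_sub_mul_cfcₙ_star_mul_self_sq_le x
      (continuousOn_id.div (by fun_prop) fun t ht => (add_pos_of_nonneg_of_pos (hσ t ht) hε).ne')
      (by simp) fun t ht => mul_one_sub_div_add_sq_le (hσ t ht) hε
  have hdist : dist (star x) (G * star x) = ‖x - x * G‖ := by
    rw [dist_eq_norm, ← norm_star, star_sub, star_mul, star_star, hG.star_eq]
  rw [hdist]
  nlinarith [norm_nonneg (x - x * G)]

lemma star_mul_self_sub_mem (hI : IsClosed (I : Set A)) {u : A}
    (hu : ∀ a, u * a - a ∈ I ∧ a * u - a ∈ I) : star u * u - u ∈ I := by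
  have h₁ : u * star u - u ∈ I := by
    simpa using star_mem_of_isClosed hI (hu (star u)).1
  have h₂ := I.add_mem (hu (star u)).2 (I.sub_mem h₁ (hu (star u)).1)
  rwa [sub_sub_sub_cancel_left, sub_add_sub_cancel] at h₂

end TwoSidedIdeal

end CStarAlgebra

namespace Stmt15

variable {A : Type*} [NonUnitalCStarAlgebra A]

lemma CuntzLeMat.apply_mem {I : TwoSidedIdeal A} (hI : IsClosed (I : Set A)) {p q : ℕ}
    {a : Matrix (Fin p) (Fin p) A} {b : Matrix (Fin q) (Fin q) A} (hab : CuntzLeMat a b)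
    (hb : ∀ i j, b i j ∈ I) (i j : Fin p) : a i j ∈ I := by
  obtain ⟨x, hx⟩ := hab
  refine hI.mem_of_tendsto (((continuous_apply_apply i j).tendsto a).comp hx)
    (Eventually.of_forall fun k => ?_)
  simp only [Function.comp, Matrix.mul_apply]
  exact sum_mem fun l _ => I.mul_mem_right _ _ (sum_mem fun m _ => I.mul_mem_left _ _ (hb m l))

lemma PrecS.mem_of_mem {I : TwoSidedIdeal A} (hI : IsClosed (I : Set A)) {a b : A}
    (hab : PrecS a b) (hb : b ∈ I) : a ∈ I := by
  obtain ⟨k, hk⟩ := hab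
  have hbI : ∀ i j, tensorOne b (k + 1) i j ∈ I := fun i j => by
    rw [tensorOne, diagonal_apply]
    split_ifs
    exacts [hb, I.zero_mem]
  simpa [tensorOne] using hk.apply_mem hI hbI 0 0

variable [PartialOrder A] [StarOrderedRing A]

lemma cfcₙ_mem_Fset {f e : ℝ → ℝ} (a : A) (hf : ∀ t, 0 ≤ f t) (he : ∀ t, 0 ≤ e t)
    (hef : ∀ t, e t * f t = f t) (hfc : Continuous f) (hec : Continuous e) (he0 : e 0 = 0) :
    cfcₙ f a ∈ Fset A := by
  have hf0 : f 0 = 0 := by rw [← hef, he0, zero_mul]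
  refine ⟨cfcₙ_nonneg fun t _ => hf t, cfcₙ e a, cfcₙ_nonneg fun t _ => he t, ?_⟩
  rw [← cfcₙ_mul e f a hec.continuousOn he0 hfc.continuousOn hf0, funext hef]

lemma exists_mem_Fset_sub_mem {I : TwoSidedIdeal A} {a : A} (ha : IsSelfAdjoint a)
    (he : ∀ y, a * y - y ∈ I) : ∃ h ∈ Fset A, h - a ∈ I := by
  set f : ℝ → ℝ := fun t => max 0 (2 * t - 1)
  set g : ℝ → ℝ := fun t => min t 2⁻¹ / (1 - min t 2⁻¹)
  have hfc : Continuous f := by fun_prop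
  have hg : Continuous g := by
    refine Continuous.div (by fun_prop) (by fun_prop) fun t => ?_
    have := min_le_right t 2⁻¹
    linarith
  have hfg : ∀ t, f t - t = (t - 1) * g t := by
    intro t
    rcases le_total t 2⁻¹ with ht | ht
    · have : 1 - t ≠ 0 := by linarith
      simp only [f, g, min_eq_left ht, max_eq_left (by linarith : 2 * t - 1 ≤ 0)]
      field_simp
      ring
    · simp only [f, g, min_eq_right ht, max_eq_right (by linarith : 0 ≤ 2 * t - 1)]
      ring
  have hFset : cfcₙ f a ∈ Fset A := by
    refine cfcₙ_mem_Fset (e := fun t => min 1 (max 0 (2 * t))) a (fun t => le_max_left _ _)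
      (fun t => le_min zero_le_one (le_max_left _ _)) (fun t => ?_) hfc (by fun_prop) (by simp)
    rcases le_total t 2⁻¹ with ht | ht
    · simp [f, max_eq_left (by linarith : 2 * t - 1 ≤ 0)]
    · simp [min_eq_left (le_max_of_le_right (by linarith) : (1 : ℝ) ≤ max 0 (2 * t))]
  refine ⟨cfcₙ f a, hFset, ?_⟩
  have : cfcₙ f a - a = cfcₙ (fun t => (t - 1) * g t) a := by
    rw [← funext hfg, cfcₙ_sub f (fun t => t) a, cfcₙ_id' ℝ a]
  rw [this]
  exact I.cfcₙ_sub_one_mul_mem ha he hg.continuousOn (by simp [g])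

theorem no_unital_quotient_general
    (hS : PropS A) (I : TwoSidedIdeal A) (hI : IsClosed (I : Set A))
    (hu : ∃ u : A, ∀ a : A, u * a - a ∈ I ∧ a * u - a ∈ I) :
    ∀ a : A, a ∈ I := by
  obtain ⟨u, hu⟩ := hu
  have hu_left : ∀ y, u * y - y ∈ I := fun y => (hu y).1
  have hau := I.star_mul_self_sub_mem hI hu
  obtain ⟨h, hF, hha⟩ := exists_mem_Fset_sub_mem (star_mul_self_nonneg u).isSelfAdjoint
    (I.forall_mul_sub_mem_of_sub_mem hu_left hau)
  have hh_left := I.forall_mul_sub_mem_of_sub_mem hu_left (by simpa using I.add_mem hha hau)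
  obtain ⟨b, -, hhb, hprec⟩ := hS h hF
  have hb : b ∈ I := by simpa [hhb] using I.neg_mem (hh_left b)
  exact I.mem_of_forall_mul_sub_mem hh_left (hprec.mem_of_mem hI hb)

/-- Lemma 4.2: a separable C*-algebra with property (S) has no non-zero unital quotients:
if `I` is a closed two-sided ideal such that `A/I` has a unit (i.e. there is `u ∈ A` with
`u * a ≡ a` and `a * u ≡ a` modulo `I` for all `a`), then `A/I = 0` (i.e. `I = A`). -/
theorem no_unital_quotient [TopologicalSpace.SeparableSpace A]
    (hS : PropS A) (I : TwoSidedIdeal A) (hI : IsClosed (I : Set A))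
    (hu : ∃ u : A, ∀ a : A, u * a - a ∈ I ∧ a * u - a ∈ I) :
    ∀ a : A, a ∈ I :=
  no_unital_quotient_general hS I hI hu

end Stmt15
end
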